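/- arXiv:1801.03427 — 7 statements merged into one kernel-verified Lean document; each statement's English description precedes it below -/
import Mathlib

section
/- Let h : ℝ → ℝ be defined by h(t) = (t+1)·sin(ln(t+1)) for t > 0 and h(t) = 0 for t ≤ 0, and let t_n = e^{2πn} − 1 for n ∈ ℕ. Then for every bounded set B ⊂ ℝ, h(t_n + s) → s as n → ∞ uniformly for s ∈ B. -/
/-!
Write `E = exp (2πn)`. Since `log E = 2πn`, periodicity of `sin` gives
`h (t_n + s) = E * g (s / E)` with `g x = (1 + x) sin (log (1 + x))`, and `g 0 = 0`, `g' 0 = 1`.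
For any function differentiable at `0` and vanishing there, `E * g (s / E) → g' 0 * s` as
`E → ∞`, uniformly for bounded `s`: the error is `E * o(|s| / E) = o(1) * |s|`.
-/

noncomputable def hFun (t : ℝ) : ℝ :=
  if t > 0 then (t + 1) * Real.sin (Real.log (t + 1)) else 0

noncomputable def tSeq (n : ℕ) : ℝ := Real.exp (2 * Real.pi * n) - 1

open Filter Real

theorem tendstoUniformlyOn_mul_comp_div {g : ℝ → ℝ} {g' : ℝ} (hg : HasDerivAt g g' 0)
    (hg0 : g 0 = 0) (R : ℝ) :
    TendstoUniformlyOn (fun E s => E * g (s / E)) (fun s => g' * s) atTop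
      (Metric.closedBall 0 R) := by
  rw [Metric.tendstoUniformlyOn_iff]
  intro ε hε
  have hc : 0 < ε / (|R| + 1) := by positivity
  obtain ⟨δ, hδ, hsmall⟩ := Metric.eventually_nhds_iff.mp
    ((hasDerivAt_iff_isLittleO.mp hg).def hc)
  filter_upwards [eventually_gt_atTop 0, eventually_gt_atTop (|R| / δ)] with E hE hEδ s hs
  have hsR : |s| ≤ |R| := by
    rw [Metric.mem_closedBall, dist_zero_right, norm_eq_abs] at hs
    exact hs.trans (le_abs_self R)
  have hx : dist (s / E) 0 < δ := by
    rw [dist_zero_right, norm_eq_abs, abs_div, abs_of_pos hE, div_lt_iff₀ hE]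
    rw [div_lt_iff₀ hδ] at hEδ
    linarith
  have hlin : |g (s / E) - s / E * g'| ≤ ε / (|R| + 1) * (|s| / E) := by
    simpa [hg0, abs_div, abs_of_pos hE] using hsmall hx
  calc dist (g' * s) (E * g (s / E)) = E * |g (s / E) - s / E * g'| := by
        rw [dist_comm, dist_eq_norm, norm_eq_abs, ← abs_of_pos hE, ← abs_mul, abs_of_pos hE]
        congr 1
        field_simp
    _ ≤ E * (ε / (|R| + 1) * (|s| / E)) := by gcongr
    _ = ε * (|s| / (|R| + 1)) := by field_simp
    _ < ε := by
        apply mul_lt_of_lt_one_right hε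
        rw [div_lt_one (by positivity)]
        linarith

noncomputable def oneAddMulSinLog (x : ℝ) : ℝ := (1 + x) * sin (log (1 + x))

theorem oneAddMulSinLog_zero : oneAddMulSinLog 0 = 0 := by
  simp [oneAddMulSinLog]

theorem hasDerivAt_oneAddMulSinLog_zero : HasDerivAt oneAddMulSinLog 1 0 := by
  have hlin : HasDerivAt (fun x : ℝ => 1 + x) 1 0 := (hasDerivAt_id 0).const_add 1
  have hlog := (Real.hasDerivAt_log (by norm_num : (1 + 0 : ℝ) ≠ 0)).comp 0 hlin
  unfold oneAddMulSinLog
  simpa [Function.comp_def] using hlin.fun_mul hlog.sin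

theorem hFun_tSeq_add {n : ℕ} {s : ℝ} (hpos : 0 < tSeq n + s) :
    hFun (tSeq n + s) = exp (2 * π * n) * oneAddMulSinLog (s / exp (2 * π * n)) := by
  set E := exp (2 * π * n)
  have hE : 0 < E := exp_pos _
  have hshift : tSeq n + s + 1 = E * (1 + s / E) := by
    rw [tSeq, mul_add, mul_div_cancel₀ _ hE.ne']
    ring
  have h1x : 0 < 1 + s / E := by
    rw [← mul_pos_iff_of_pos_left hE, ← hshift]
    linarith
  rw [hFun, if_pos hpos, hshift, log_mul hE.ne' h1x.ne', log_exp, oneAddMulSinLog,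
    add_comm (2 * π * n), mul_comm (2 * π), mul_assoc, sin_add_nat_mul_two_pi]

theorem stmt0 :
    ∀ R > (0 : ℝ), ∀ ε > (0 : ℝ), ∃ N : ℕ, ∀ n ≥ N, ∀ s : ℝ, |s| ≤ R →
      |hFun (tSeq n + s) - s| < ε := by
  intro R _ ε hε
  have hE : Tendsto (fun n : ℕ => exp (2 * π * n)) atTop atTop :=
    tendsto_exp_atTop.comp <| tendsto_natCast_atTop_atTop.const_mul_atTop (by positivity)
  have hunif := Metric.tendstoUniformlyOn_iff.mp (tendstoUniformlyOn_mul_comp_div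
    hasDerivAt_oneAddMulSinLog_zero oneAddMulSinLog_zero R) ε hε
  obtain ⟨N, hN⟩ := eventually_atTop.mp
    (hE.eventually (hunif.and (eventually_gt_atTop (R + 1))))
  refine ⟨N, fun n hn s hs => ?_⟩
  obtain ⟨hclose, hlarge⟩ := hN n hn
  have hpos : 0 < tSeq n + s := by
    rw [tSeq]
    linarith [neg_abs_le s]
  rw [hFun_tSeq_add hpos, abs_sub_comm, ← Real.dist_eq]
  simpa using hclose s (by simpa using hs)
end

section
/- Let K be a compact subset of a product space Y × X (Y, X metric spaces), let U_A, U_R ⊂ Y × X be open with U_A ∩ U_R = ∅, and let y' ∈ Y be such that the fiber K(y') := {x : (y',x) ∈ K} satisfies {y'} × K(y') ⊂ U_A ∪ U_R. Then there exists a neighbourhood U of y' in Y such that {y} × K(y) ⊂ U_A ∪ U_R for all y ∈ U. -/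
theorem stmt8 {Y X : Type*} [MetricSpace Y] [MetricSpace X]
    (K : Set (Y × X)) (hK : IsCompact K)
    (U_A U_R : Set (Y × X)) (hUA : IsOpen U_A) (hUR : IsOpen U_R)
    (hdisj : U_A ∩ U_R = ∅)
    (y' : Y)
    (hy' : ∀ x : X, (y', x) ∈ K → (y', x) ∈ U_A ∪ U_R) :
    ∃ U ∈ nhds y', ∀ y ∈ U, ∀ x : X, (y, x) ∈ K → (y, x) ∈ U_A ∪ U_R := by
  have hC : IsCompact (K \ (U_A ∪ U_R)) :=
    hK.diff (hUA.union hUR)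
  have hP : IsCompact (Prod.fst '' (K \ (U_A ∪ U_R))) := hC.image continuous_fst
  have hPc : IsClosed (Prod.fst '' (K \ (U_A ∪ U_R))) := hP.isClosed
  have hy'P : y' ∉ Prod.fst '' (K \ (U_A ∪ U_R)) := by
    rintro ⟨⟨y, x⟩, ⟨hmem, hnot⟩, rfl⟩
    exact hnot (hy' x hmem)
  refine ⟨(Prod.fst '' (K \ (U_A ∪ U_R)))ᶜ, hPc.isOpen_compl.mem_nhds hy'P, ?_⟩
  intro y hy x hx
  by_contra h
  exact hy ⟨(y, x), ⟨hx, h⟩, rfl⟩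
end

section
/- Let χ be a semiflow on ℝ⁺ × X and suppose (N₁, N₃) is an index pair and (L₁, L₃) is an index pair with L₁ ⊂ N₁, L₃ ⊂ L₁, and set L₂ := L₁ ∩ N₂ where N₂ satisfies N₃ ⊂ N₂ ⊂ N₁ and (N₂, N₃) is an index pair, and assume L₃ ⊂ L₂ and N₂ is positively invariant relative to N₁. Then (L₂, L₃) satisfies the index-pair exit conditions: (IP2) if x ∈ L₂ and x χ t ∉ L₂, then x χ s ∈ L₃ for some s ∈ [0,t]; (IP3) if x ∈ L₃ and x χ t ∉ L₃, then x χ s ∉ L₂ for some s ∈ [0,t]. -/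
open Set

/-- The exit conditions (IP2)–(IP3) for an index pair `(P₁, P₂)` relative to a semiflow `χ`. -/
def IndexPairConds {X : Type*} (χ : ℝ → X → X) (P₁ P₂ : Set X) : Prop :=
  (∀ x ∈ P₁, ∀ t : ℝ, 0 ≤ t → χ t x ∉ P₁ → ∃ s ∈ Icc (0:ℝ) t, χ s x ∈ P₂) ∧
  (∀ x ∈ P₂, ∀ t : ℝ, 0 ≤ t → χ t x ∉ P₂ → ∃ s ∈ Icc (0:ℝ) t, χ s x ∉ P₁)

theorem stmt14 {X : Type*} (χ : ℝ → X → X)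
    (N₁ N₂ N₃ L₁ L₃ : Set X)
    (hN₃N₂ : N₃ ⊆ N₂) (hN₂N₁ : N₂ ⊆ N₁)
    (hL₁N₁ : L₁ ⊆ N₁) (hL₃L₁ : L₃ ⊆ L₁)
    (hL₃L₂ : L₃ ⊆ L₁ ∩ N₂)
    (hN₁N₃ : IndexPairConds χ N₁ N₃)
    (hN₂N₃ : IndexPairConds χ N₂ N₃)
    (hL₁L₃ : IndexPairConds χ L₁ L₃)
    -- N₂ is positively invariant relative to N₁
    (hposinv : ∀ x ∈ N₂, ∀ t : ℝ, 0 ≤ t →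
      (∀ s ∈ Icc (0:ℝ) t, χ s x ∈ N₁) → χ t x ∈ N₂) :
    -- (IP2) and (IP3) for (L₂, L₃) where L₂ := L₁ ∩ N₂
    (∀ x ∈ L₁ ∩ N₂, ∀ t : ℝ, 0 ≤ t → χ t x ∉ L₁ ∩ N₂ →
      ∃ s ∈ Icc (0:ℝ) t, χ s x ∈ L₃) ∧
    (∀ x ∈ L₃, ∀ t : ℝ, 0 ≤ t → χ t x ∉ L₃ →
      ∃ s ∈ Icc (0:ℝ) t, χ s x ∉ L₁ ∩ N₂) := by
  constructor
  · rintro x ⟨hxL₁, hxN₂⟩ t ht hout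
    by_cases hL : χ t x ∈ L₁
    · -- then χ t x ∉ N₂, so the orbit must leave N₁ by time t
      have hN2 : χ t x ∉ N₂ := fun h => hout ⟨hL, h⟩
      have : ¬ (∀ s ∈ Icc (0:ℝ) t, χ s x ∈ N₁) := fun h => hN2 (hposinv x hxN₂ t ht h)
      push_neg at this
      obtain ⟨s, hs, hsN₁⟩ := this
      have hsL₁ : χ s x ∉ L₁ := fun h => hsN₁ (hL₁N₁ h)
      obtain ⟨s', hs', hs'L₃⟩ := hL₁L₃.1 x hxL₁ s hs.1 hsL₁
      exact ⟨s', ⟨hs'.1, hs'.2.trans hs.2⟩, hs'L₃⟩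
    · exact hL₁L₃.1 x hxL₁ t ht hL
  · intro x hx t ht hout
    obtain ⟨s, hs, hsL₁⟩ := hL₁L₃.2 x hx t ht hout
    exact ⟨s, hs, fun h => hsL₁ h.1⟩
end

section
/- Let χ be a continuous semiflow on a metric space, (N₁, N₂) a pair of closed sets satisfying the index pair conditions (IP1)–(IP3), and define λ(x) := ∫₀^{T(x)} f(x χ s) ds, where T(x) := sup{t : x χ [0,t] ⊂ N₁ \ N₂} and f : N₁ → [0,1] is continuous with f = 0 on N₂ and f = 1 on cl(N₁ \ N₂^{-T}) for a fixed T > 0 with N₂^{-T} a neighbourhood of N₂ in N₁. Then T(x) − T ≤ λ(x) ≤ T(x) for all x ∈ N₁ (with the convention ∞ − T = ∞). -/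
open Set MeasureTheory
open scoped ENNReal

/-!
Before the exit time `T x` the orbit stays in `N₁ \ N₂`, where `f ≤ 1`; this gives `λ ≤ T`.
If `s + Tc < T x`, the orbit of `x χ s` avoids `N₂` for the time `Tc`, so `x χ s ∉ N₂^{-Tc}` and
`f (x χ s) = 1`; hence `f = 1` on `[0, T x - Tc)`, which gives `T - Tc ≤ λ`.
-/

noncomputable def survivalTime (P : ℝ → Prop) : ℝ≥0∞ :=
  sSup {t : ℝ≥0∞ | ∀ s : ℝ, 0 ≤ s → ENNReal.ofReal s ≤ t → P s}

theorem of_lt_survivalTime {P : ℝ → Prop} {s : ℝ} (hs : 0 ≤ s)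
    (hlt : ENNReal.ofReal s < survivalTime P) : P s := by
  obtain ⟨t, ht, hst⟩ := lt_sSup_iff.mp hlt
  exact ht s hs hst.le

def icoZero (τ : ℝ≥0∞) : Set ℝ := {s : ℝ | 0 ≤ s ∧ ENNReal.ofReal s < τ}

theorem measurableSet_icoZero (τ : ℝ≥0∞) : MeasurableSet (icoZero τ) :=
  measurableSet_Ici.inter (measurableSet_lt ENNReal.measurable_ofReal measurable_const)

theorem icoZero_mono {τ σ : ℝ≥0∞} (h : τ ≤ σ) : icoZero τ ⊆ icoZero σ :=
  fun _ hs => ⟨hs.1, hs.2.trans_le h⟩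

theorem volume_icoZero (τ : ℝ≥0∞) : volume (icoZero τ) = τ := by
  rcases eq_or_ne τ ⊤ with rfl | hτ
  · have : icoZero ⊤ = Ici 0 := by ext s; simp [icoZero]
    rw [this, Real.volume_Ici]
  · have : icoZero τ = Ico 0 τ.toReal := by
      ext s
      exact and_congr_right fun hs => ENNReal.ofReal_lt_iff_lt_toReal hs hτ
    rw [this, Real.volume_Ico, sub_zero, ENNReal.ofReal_toReal hτ]

theorem setLIntegral_icoZero_le {g : ℝ → ℝ} {τ : ℝ≥0∞} (hg : ∀ s ∈ icoZero τ, g s ≤ 1) :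
    ∫⁻ s in icoZero τ, ENNReal.ofReal (g s) ≤ τ :=
  calc ∫⁻ s in icoZero τ, ENNReal.ofReal (g s)
      ≤ ∫⁻ _ in icoZero τ, 1 :=
        setLIntegral_mono' (measurableSet_icoZero τ) fun s hs => ENNReal.ofReal_le_one.2 (hg s hs)
    _ = τ := by rw [setLIntegral_one, volume_icoZero]

theorem sub_le_setLIntegral_icoZero {g : ℝ → ℝ} {τ : ℝ≥0∞} {c : ℝ} (hc : 0 ≤ c)
    (hg : ∀ s : ℝ, 0 ≤ s → ENNReal.ofReal (s + c) < τ → g s = 1) :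
    τ - ENNReal.ofReal c ≤ ∫⁻ s in icoZero τ, ENNReal.ofReal (g s) := by
  have hshift : ∀ s ∈ icoZero (τ - ENNReal.ofReal c), ENNReal.ofReal (s + c) < τ := by
    rintro s ⟨hs, hlt⟩
    rwa [ENNReal.ofReal_add hs hc, ← lt_tsub_iff_right]
  calc τ - ENNReal.ofReal c
      = ∫⁻ _ in icoZero (τ - ENNReal.ofReal c), 1 := by rw [setLIntegral_one, volume_icoZero]
    _ ≤ ∫⁻ s in icoZero (τ - ENNReal.ofReal c), ENNReal.ofReal (g s) :=
        setLIntegral_mono' (measurableSet_icoZero _) fun s hs => by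
          rw [hg s hs.1 (hshift s hs), ENNReal.ofReal_one]
    _ ≤ ∫⁻ s in icoZero τ, ENNReal.ofReal (g s) := lintegral_mono_set (icoZero_mono tsub_le_self)

theorem stmt15_general {X : Type*} [MetricSpace X]
    (χ : ℝ → X → X)
    (hsemi : ∀ s t : ℝ, 0 ≤ s → 0 ≤ t → ∀ z, χ s (χ t z) = χ (s + t) z)
    (N₁ N₂ : Set X)
    -- the exit time T
    (T : X → ℝ≥0∞)
    (hT : ∀ x ∈ N₁, T x = sSup {t : ℝ≥0∞ |
      ∀ s : ℝ, 0 ≤ s → ENNReal.ofReal s ≤ t → χ s x ∈ N₁ \ N₂})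
    -- the fixed time Tc > 0 such that N₂^{-Tc} is a neighbourhood of N₂ in N₁
    (Tc : ℝ) (hTc : 0 < Tc)
    -- the Urysohn function f
    (f : X → ℝ)
    (hf01 : ∀ x ∈ N₁, f x ∈ Icc (0:ℝ) 1)
    (hf1 : ∀ x ∈ closure (N₁ \ {y ∈ N₁ | ∃ s ∈ Icc (0:ℝ) Tc, χ s y ∈ N₂}), f x = 1)
    -- λ(x) = ∫₀^{T(x)} f(x χ s) ds
    (lam : X → ℝ≥0∞)
    (hlam : ∀ x ∈ N₁, lam x =
      ∫⁻ s in {s : ℝ | 0 ≤ s ∧ ENNReal.ofReal s < T x}, ENNReal.ofReal (f (χ s x))) :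
    ∀ x ∈ N₁, T x - ENNReal.ofReal Tc ≤ lam x ∧ lam x ≤ T x := by
  intro x hx
  have hinside : ∀ s ∈ icoZero (T x), χ s x ∈ N₁ \ N₂ := fun s hs =>
    of_lt_survivalTime (P := fun s => χ s x ∈ N₁ \ N₂) hs.1 (hs.2.trans_eq (hT x hx))
  have hfone : ∀ s : ℝ, 0 ≤ s → ENNReal.ofReal (s + Tc) < T x → f (χ s x) = 1 := by
    intro s hs hlt
    have hlate : ∀ r : ℝ, s ≤ r → r ≤ s + Tc → χ r x ∈ N₁ \ N₂ := fun r hsr hr =>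
      hinside r ⟨hs.trans hsr, (ENNReal.ofReal_le_ofReal hr).trans_lt hlt⟩
    refine hf1 _ (subset_closure ⟨(hlate s le_rfl (by linarith)).1, ?_⟩)
    rintro ⟨-, r, ⟨hr0, hrTc⟩, hrN₂⟩
    rw [hsemi r s hr0 hs] at hrN₂
    exact (hlate (r + s) (by linarith) (by linarith)).2 hrN₂
  rw [hlam x hx]
  exact ⟨sub_le_setLIntegral_icoZero hTc.le hfone,
    setLIntegral_icoZero_le fun s hs => (hf01 _ (hinside s hs).1).2⟩

theorem stmt15 {X : Type*} [MetricSpace X] [MeasurableSpace X]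
    (χ : ℝ → X → X)
    (hcont : Continuous fun p : ℝ × X => χ p.1 p.2)
    (hzero : ∀ z, χ 0 z = z)
    (hsemi : ∀ s t : ℝ, 0 ≤ s → 0 ≤ t → ∀ z, χ s (χ t z) = χ (s + t) z)
    (N₁ N₂ : Set X) (hsub : N₂ ⊆ N₁) (h₁ : IsClosed N₁) (h₂ : IsClosed N₂)
    -- (IP2), (IP3)
    (hIP2 : ∀ x ∈ N₁, ∀ t : ℝ, 0 ≤ t → χ t x ∉ N₁ → ∃ s ∈ Icc (0:ℝ) t, χ s x ∈ N₂)
    (hIP3 : ∀ x ∈ N₂, ∀ t : ℝ, 0 ≤ t → χ t x ∉ N₂ → ∃ s ∈ Icc (0:ℝ) t, χ s x ∉ N₁)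
    -- the exit time T
    (T : X → ℝ≥0∞)
    (hT : ∀ x ∈ N₁, T x = sSup {t : ℝ≥0∞ |
      ∀ s : ℝ, 0 ≤ s → ENNReal.ofReal s ≤ t → χ s x ∈ N₁ \ N₂})
    -- the fixed time Tc > 0 such that N₂^{-Tc} is a neighbourhood of N₂ in N₁
    (Tc : ℝ) (hTc : 0 < Tc)
    (hnbhd : ∀ x (hx : x ∈ N₂), {y : N₁ | ∃ s ∈ Icc (0:ℝ) Tc, χ s (y : X) ∈ N₂} ∈
      nhds (⟨x, hsub hx⟩ : N₁))
    -- the Urysohn function f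
    (f : X → ℝ) (hfcont : ContinuousOn f N₁)
    (hf01 : ∀ x ∈ N₁, f x ∈ Icc (0:ℝ) 1)
    (hf0 : ∀ x ∈ N₂, f x = 0)
    (hf1 : ∀ x ∈ closure (N₁ \ {y ∈ N₁ | ∃ s ∈ Icc (0:ℝ) Tc, χ s y ∈ N₂}), f x = 1)
    -- λ(x) = ∫₀^{T(x)} f(x χ s) ds
    (lam : X → ℝ≥0∞)
    (hlam : ∀ x ∈ N₁, lam x =
      ∫⁻ s in {s : ℝ | 0 ≤ s ∧ ENNReal.ofReal s < T x}, ENNReal.ofReal (f (χ s x))) :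
    ∀ x ∈ N₁, T x - ENNReal.ofReal Tc ≤ lam x ∧ lam x ≤ T x :=
  stmt15_general χ hsemi N₁ N₂ T hT Tc hTc f hf01 hf1 lam hlam
end

section
/- With the notation of the previous statement, the function λ : N₁ → [0,∞] is monotone decreasing along the semiflow in the sense that λ(x χ t) ≤ λ(x) whenever x χ [0,t] ⊂ N₁, and hence N₂' := λ^{-1}([0, T+1]) is positively invariant relative to N₁. -/
/-!
Along a piece of orbit `x χ [0,t] ⊂ N₁` there are two cases. If the orbit meets `N₂`, then by (IP3)
it cannot leave `N₂` again without leaving `N₁`, so `x χ t ∈ N₂`, where `T`, and hence `λ`, vanishes.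
Otherwise the orbit runs in `N₁ \ N₂`, so `T(x χ t) = T(x) - t`, and the substitution `u = s + t`
turns `λ(x χ t)` into the integral of the same nonnegative integrand over `[t, T(x)) ⊆ [0, T(x))`.
-/

open Set MeasureTheory
open scoped ENNReal

theorem setLIntegral_tsub_comp_add_le (g : ℝ → ℝ≥0∞) (a : ℝ≥0∞) {t : ℝ} (ht : 0 ≤ t) :
    ∫⁻ s in {s : ℝ | 0 ≤ s ∧ ENNReal.ofReal s < a - ENNReal.ofReal t}, g (s + t) ≤
      ∫⁻ u in {u : ℝ | 0 ≤ u ∧ ENNReal.ofReal u < a}, g u := by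
  set I := {u : ℝ | 0 ≤ u ∧ ENNReal.ofReal u < a}
  have hsub : {s : ℝ | 0 ≤ s ∧ ENNReal.ofReal s < a - ENNReal.ofReal t} ⊆ (· + t) ⁻¹' I := by
    rintro s ⟨hs, hlt⟩
    refine ⟨add_nonneg hs ht, ?_⟩
    rwa [ENNReal.ofReal_add hs ht, ← lt_tsub_iff_right]
  calc _ ≤ ∫⁻ s in (· + t) ⁻¹' I, g (s + t) := lintegral_mono_set hsub
    _ = ∫⁻ u in I, g u :=
      (measurePreserving_add_right volume t).setLIntegral_comp_preimage_emb
        (MeasurableEquiv.addRight t).measurableEmbedding g I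

section Semiflow

variable {X : Type*} {χ : ℝ → X → X} {N₁ N₂ : Set X}

theorem semiflow_mem_of_mem_of_orbit_subset
    (hsemi : ∀ s t : ℝ, 0 ≤ s → 0 ≤ t → ∀ z, χ s (χ t z) = χ (s + t) z)
    (hIP3 : ∀ x ∈ N₂, ∀ t : ℝ, 0 ≤ t → χ t x ∉ N₂ → ∃ s ∈ Icc (0:ℝ) t, χ s x ∉ N₁)
    {x : X} {t s₀ : ℝ} (hs₀ : s₀ ∈ Icc 0 t) (hmem : χ s₀ x ∈ N₂)
    (horbit : ∀ s ∈ Icc 0 t, χ s x ∈ N₁) : χ t x ∈ N₂ := by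
  by_contra hout
  have hshift : χ (t - s₀) (χ s₀ x) = χ t x := by
    rw [hsemi _ _ (sub_nonneg.2 hs₀.2) hs₀.1, sub_add_cancel]
  obtain ⟨s, hs, hexit⟩ := hIP3 _ hmem (t - s₀) (sub_nonneg.2 hs₀.2) (hshift ▸ hout)
  rw [hsemi _ _ hs.1 hs₀.1] at hexit
  exact hexit (horbit _ ⟨add_nonneg hs.1 hs₀.1, by linarith [hs.2]⟩)

theorem exitIntegral_semiflow_le
    (hsemi : ∀ s t : ℝ, 0 ≤ s → 0 ≤ t → ∀ z, χ s (χ t z) = χ (s + t) z)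
    (hIP3 : ∀ x ∈ N₂, ∀ t : ℝ, 0 ≤ t → χ t x ∉ N₂ → ∃ s ∈ Icc (0:ℝ) t, χ s x ∉ N₁)
    (T : X → ℝ≥0∞) (f : X → ℝ) (lam : X → ℝ≥0∞)
    (hlam : ∀ x ∈ N₁, lam x =
      ∫⁻ s in {s : ℝ | 0 ≤ s ∧ ENNReal.ofReal s < T x}, ENNReal.ofReal (f (χ s x)))
    (hT0 : ∀ x ∈ N₂, T x = 0)
    (hTflow : ∀ x ∈ N₁, ∀ t : ℝ, 0 ≤ t → (∀ s ∈ Icc (0:ℝ) t, χ s x ∈ N₁ \ N₂) →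
      T (χ t x) = T x - ENNReal.ofReal t)
    {x : X} (hx : x ∈ N₁) {t : ℝ} (ht : 0 ≤ t) (horbit : ∀ s ∈ Icc (0:ℝ) t, χ s x ∈ N₁) :
    lam (χ t x) ≤ lam x := by
  rw [hlam _ (horbit t ⟨ht, le_rfl⟩)]
  by_cases hmeet : ∃ s ∈ Icc (0:ℝ) t, χ s x ∈ N₂
  · obtain ⟨s₀, hs₀, hmem⟩ := hmeet
    have hN₂ : χ t x ∈ N₂ := semiflow_mem_of_mem_of_orbit_subset hsemi hIP3 hs₀ hmem horbit
    simp [hT0 _ hN₂]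
  · push Not at hmeet
    rw [hTflow x hx t ht fun s hs => ⟨horbit s hs, hmeet s hs⟩, hlam x hx]
    calc _ = ∫⁻ s in {s : ℝ | 0 ≤ s ∧ ENNReal.ofReal s < T x - ENNReal.ofReal t},
          ENNReal.ofReal (f (χ (s + t) x)) :=
        setLIntegral_congr_fun (measurableSet_Ici.inter (measurableSet_lt
          ENNReal.measurable_ofReal measurable_const)) fun s hs => by rw [hsemi s t hs.1 ht]
      _ ≤ _ := setLIntegral_tsub_comp_add_le _ _ ht

end Semiflow

theorem stmt16_general {X : Type*}
    (χ : ℝ → X → X)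
    (hsemi : ∀ s t : ℝ, 0 ≤ s → 0 ≤ t → ∀ z, χ s (χ t z) = χ (s + t) z)
    (N₁ N₂ : Set X)
    -- (IP2), (IP3)
    (hIP3 : ∀ x ∈ N₂, ∀ t : ℝ, 0 ≤ t → χ t x ∉ N₂ → ∃ s ∈ Icc (0:ℝ) t, χ s x ∉ N₁)
    -- the exit time T
    (T : X → ℝ≥0∞)
    -- the fixed time Tc > 0 such that N₂^{-Tc} is a neighbourhood of N₂ in N₁
    (Tc : ℝ)
    -- the Urysohn function f
    (f : X → ℝ)
    -- λ(x) = ∫₀^{T(x)} f(x χ s) ds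
    (lam : X → ℝ≥0∞)
    (hlam : ∀ x ∈ N₁, lam x =
      ∫⁻ s in {s : ℝ | 0 ≤ s ∧ ENNReal.ofReal s < T x}, ENNReal.ofReal (f (χ s x)))
    -- T vanishes on N₂ and satisfies the flow property
    (hT0 : ∀ x ∈ N₂, T x = 0)
    (hTflow : ∀ x ∈ N₁, ∀ t : ℝ, 0 ≤ t → (∀ s ∈ Icc (0:ℝ) t, χ s x ∈ N₁ \ N₂) →
      T (χ t x) = T x - ENNReal.ofReal t) :
    -- λ is monotone decreasing along the semiflow ...
    (∀ x ∈ N₁, ∀ t : ℝ, 0 ≤ t → (∀ s ∈ Icc (0:ℝ) t, χ s x ∈ N₁) →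
      lam (χ t x) ≤ lam x) ∧
    -- ... hence N₂' := λ⁻¹([0, Tc+1]) is positively invariant relative to N₁
    (∀ x ∈ N₁, lam x ≤ ENNReal.ofReal (Tc + 1) →
      ∀ t : ℝ, 0 ≤ t → (∀ s ∈ Icc (0:ℝ) t, χ s x ∈ N₁) →
        lam (χ t x) ≤ ENNReal.ofReal (Tc + 1)) := by
  have hmono := fun x (hx : x ∈ N₁) t (ht : 0 ≤ t) horbit =>
    exitIntegral_semiflow_le hsemi hIP3 T f lam hlam hT0 hTflow hx ht horbit
  exact ⟨hmono, fun x hx hle t ht horbit => (hmono x hx t ht horbit).trans hle⟩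

theorem stmt16 {X : Type*} [MetricSpace X] [MeasurableSpace X]
    (χ : ℝ → X → X)
    (hcont : Continuous fun p : ℝ × X => χ p.1 p.2)
    (hzero : ∀ z, χ 0 z = z)
    (hsemi : ∀ s t : ℝ, 0 ≤ s → 0 ≤ t → ∀ z, χ s (χ t z) = χ (s + t) z)
    (N₁ N₂ : Set X) (hsub : N₂ ⊆ N₁) (h₁ : IsClosed N₁) (h₂ : IsClosed N₂)
    -- (IP2), (IP3)
    (hIP2 : ∀ x ∈ N₁, ∀ t : ℝ, 0 ≤ t → χ t x ∉ N₁ → ∃ s ∈ Icc (0:ℝ) t, χ s x ∈ N₂)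
    (hIP3 : ∀ x ∈ N₂, ∀ t : ℝ, 0 ≤ t → χ t x ∉ N₂ → ∃ s ∈ Icc (0:ℝ) t, χ s x ∉ N₁)
    -- the exit time T
    (T : X → ℝ≥0∞)
    (hT : ∀ x ∈ N₁, T x = sSup {t : ℝ≥0∞ |
      ∀ s : ℝ, 0 ≤ s → ENNReal.ofReal s ≤ t → χ s x ∈ N₁ \ N₂})
    -- the fixed time Tc > 0 such that N₂^{-Tc} is a neighbourhood of N₂ in N₁
    (Tc : ℝ) (hTc : 0 < Tc)
    (hnbhd : ∀ x (hx : x ∈ N₂), {y : N₁ | ∃ s ∈ Icc (0:ℝ) Tc, χ s (y : X) ∈ N₂} ∈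
      nhds (⟨x, hsub hx⟩ : N₁))
    -- the Urysohn function f
    (f : X → ℝ) (hfcont : ContinuousOn f N₁)
    (hf01 : ∀ x ∈ N₁, f x ∈ Icc (0:ℝ) 1)
    (hf0 : ∀ x ∈ N₂, f x = 0)
    (hf1 : ∀ x ∈ closure (N₁ \ {y ∈ N₁ | ∃ s ∈ Icc (0:ℝ) Tc, χ s y ∈ N₂}), f x = 1)
    -- λ(x) = ∫₀^{T(x)} f(x χ s) ds
    (lam : X → ℝ≥0∞)
    (hlam : ∀ x ∈ N₁, lam x =
      ∫⁻ s in {s : ℝ | 0 ≤ s ∧ ENNReal.ofReal s < T x}, ENNReal.ofReal (f (χ s x)))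
    -- T vanishes on N₂ and satisfies the flow property
    (hT0 : ∀ x ∈ N₂, T x = 0)
    (hTflow : ∀ x ∈ N₁, ∀ t : ℝ, 0 ≤ t → (∀ s ∈ Icc (0:ℝ) t, χ s x ∈ N₁ \ N₂) →
      T (χ t x) = T x - ENNReal.ofReal t) :
    -- λ is monotone decreasing along the semiflow ...
    (∀ x ∈ N₁, ∀ t : ℝ, 0 ≤ t → (∀ s ∈ Icc (0:ℝ) t, χ s x ∈ N₁) →
      lam (χ t x) ≤ lam x) ∧
    -- ... hence N₂' := λ⁻¹([0, Tc+1]) is positively invariant relative to N₁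
    (∀ x ∈ N₁, lam x ≤ ENNReal.ofReal (Tc + 1) →
      ∀ t : ℝ, 0 ≤ t → (∀ s ∈ Icc (0:ℝ) t, χ s x ∈ N₁) →
        lam (χ t x) ≤ ENNReal.ofReal (Tc + 1)) :=
  stmt16_general χ hsemi N₁ N₂ hIP3 T Tc f lam hlam hT0 hTflow
end

section
/- Let π be a semiflow and M ⊂ Z strongly admissible: whenever (z_n) is a sequence in M and t_n ∈ ℝ⁺ with z_n π [0, t_n] ⊂ M, the sequence (z_n π t_n) has a convergent subsequence. If t_n → ∞ and z_n π [0, t_n] ⊂ M for all n with M closed, then Inv⁻(M) is nonempty. -/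
open Set Filter

theorem stmt18 {Z : Type*} [MetricSpace Z]
    (π : ℝ → Z → Z)
    (hcont : Continuous fun p : ℝ × Z => π p.1 p.2)
    (hzero : ∀ z, π 0 z = z)
    (hsemi : ∀ s t : ℝ, 0 ≤ s → 0 ≤ t → ∀ z, π s (π t z) = π (s + t) z)
    (M : Set Z) (hMclosed : IsClosed M)
    -- M is strongly admissible
    (hadm : ∀ (z : ℕ → Z) (t : ℕ → ℝ), (∀ n, 0 ≤ t n) →
      (∀ n, ∀ s ∈ Icc (0:ℝ) (t n), π s (z n) ∈ M) →
      ∃ φ : ℕ → ℕ, StrictMono φ ∧ ∃ l : Z,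
        Tendsto (fun n => π (t (φ n)) (z (φ n))) atTop (nhds l))
    -- a sequence of longer and longer orbit segments in M
    (z : ℕ → Z) (t : ℕ → ℝ) (ht0 : ∀ n, 0 ≤ t n)
    (htinf : Tendsto t atTop atTop)
    (horb : ∀ n, ∀ s ∈ Icc (0:ℝ) (t n), π s (z n) ∈ M) :
    -- Inv⁻(M) is nonempty
    ∃ x ∈ M, ∃ u : ℝ → Z, u 0 = x ∧ (∀ s : ℝ, s ≤ 0 → u s ∈ M) ∧
      (∀ r s : ℝ, r ≤ 0 → 0 ≤ s → r + s ≤ 0 → u (r + s) = π s (u r)) := by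
  -- continuity of each time-s map
  have hcs : ∀ s : ℝ, Continuous fun w : Z => π s w := by
    intro s
    exact hcont.comp (Continuous.prodMk_right s)
  have hts : ∀ (σ : ℕ → ℕ), StrictMono σ → Tendsto (fun n => t (σ n)) atTop atTop :=
    fun σ hσ => htinf.comp hσ.tendsto_atTop
  -- the inductive step: refine a subsequence to get convergence at time shift k
  have hstep : ∀ (k : ℕ) (σ : ℕ → ℕ), StrictMono σ →
      ∃ p : (ℕ → ℕ) × Z, (∃ φ : ℕ → ℕ, StrictMono φ ∧ p.1 = σ ∘ φ) ∧ StrictMono p.1 ∧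
        Tendsto (fun n => π (t (p.1 n) - k) (z (p.1 n))) atTop (nhds p.2) := by
    intro k σ hσ
    obtain ⟨φ, hφ, l, hl⟩ := hadm (fun n => z (σ n)) (fun n => max (t (σ n) - k) 0)
      (fun n => le_max_right _ _)
      (by
        intro n s hs
        refine horb (σ n) s ⟨hs.1, hs.2.trans ?_⟩
        exact max_le (by linarith [Nat.cast_nonneg (α := ℝ) k]) (ht0 (σ n)))
    refine ⟨⟨σ ∘ φ, l⟩, ⟨φ, hφ, rfl⟩, hσ.comp hφ, ?_⟩
    have hev : ∀ᶠ n in atTop, (k:ℝ) ≤ t (σ (φ n)) :=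
      (hts (σ ∘ φ) (hσ.comp hφ)).eventually_ge_atTop k
    refine Tendsto.congr' (hev.mono fun n hn => ?_) hl
    simp [max_eq_left (by linarith : (0:ℝ) ≤ t (σ (φ n)) - k)]
  choose f hf1 hf2 hf3 using hstep
  -- iterate the step
  set g : ℕ → {σ : ℕ → ℕ // StrictMono σ} × Z :=
    Nat.rec
      (⟨⟨(f 0 id strictMono_id).1, hf2 0 id strictMono_id⟩, (f 0 id strictMono_id).2⟩)
      (fun k prev => ⟨⟨(f (k+1) prev.1.1 prev.1.2).1, hf2 (k+1) prev.1.1 prev.1.2⟩,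
        (f (k+1) prev.1.1 prev.1.2).2⟩) with hg
  set y : ℕ → Z := fun k => (g k).2 with hy
  set σs : ℕ → (ℕ → ℕ) := fun k => (g k).1.1 with hσsdef
  have hσs : ∀ k, StrictMono (σs k) := fun k => (g k).1.2
  have hconv : ∀ k, Tendsto (fun n => π (t (σs k n) - k) (z (σs k n))) atTop (nhds (y k)) := by
    intro k
    cases k with
    | zero => exact hf3 0 id strictMono_id
    | succ k => exact hf3 (k+1) (σs k) (hσs k)
  have hsub : ∀ k, ∃ φ : ℕ → ℕ, StrictMono φ ∧ σs (k+1) = σs k ∘ φ :=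
    fun k => hf1 (k+1) (σs k) (hσs k)
  -- the key backward relation
  have hrel : ∀ k, π 1 (y (k+1)) = y k := by
    intro k
    obtain ⟨φ, hφ, hcomp⟩ := hsub k
    have h1 : Tendsto (fun n => π (t (σs (k+1) n) - k) (z (σs (k+1) n))) atTop (nhds (y k)) := by
      have h := (hconv k).comp hφ.tendsto_atTop
      rw [hcomp]
      exact h
    have h2 : Tendsto (fun n => π 1 (π (t (σs (k+1) n) - ((k:ℝ)+1)) (z (σs (k+1) n)))) atTop
        (nhds (π 1 (y (k+1)))) := by
      have := ((hcs 1).tendsto (y (k+1))).comp (hconv (k+1))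
      refine this.congr fun n => ?_
      push_cast
      rfl
    have hev : ∀ᶠ n in atTop, ((k:ℝ)+1) ≤ t (σs (k+1) n) :=
      (hts _ (hσs (k+1))).eventually_ge_atTop _
    have h2' : Tendsto (fun n => π (t (σs (k+1) n) - k) (z (σs (k+1) n))) atTop
        (nhds (π 1 (y (k+1)))) := by
      refine Tendsto.congr' (hev.mono fun n hn => ?_) h2
      rw [hsemi 1 (t (σs (k+1) n) - ((k:ℝ)+1)) zero_le_one (by linarith)]
      congr 1
      ring
    exact tendsto_nhds_unique h2' h1
  -- membership of the whole limiting segment in M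
  have hmem : ∀ (k : ℕ) (s : ℝ), 0 ≤ s → s ≤ k → π s (y k) ∈ M := by
    intro k s hs0 hsk
    have hlim : Tendsto (fun n => π s (π (t (σs k n) - k) (z (σs k n)))) atTop
        (nhds (π s (y k))) := ((hcs s).tendsto (y k)).comp (hconv k)
    refine hMclosed.mem_of_tendsto hlim ?_
    filter_upwards [(hts _ (hσs k)).eventually_ge_atTop (k:ℝ)] with n hn
    rw [hsemi s (t (σs k n) - k) hs0 (by linarith)]
    exact horb (σs k n) _ ⟨by linarith, by linarith⟩
  -- iterate the backward relation
  have hchain : ∀ (j k : ℕ), π (j:ℝ) (y (k + j)) = y k := by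
    intro j
    induction j with
    | zero => intro k; simpa using hzero (y k)
    | succ j ih =>
      intro k
      have h1 : π ((j:ℝ)+1) (y (k + j + 1)) = π (j:ℝ) (π 1 (y (k + j + 1))) :=
        (hsemi (j:ℝ) 1 (Nat.cast_nonneg j) zero_le_one _).symm
      have h2 : k + (j+1) = k + j + 1 := rfl
      rw [h2]
      push_cast
      rw [h1, hrel (k + j), ih k]
  -- well-definedness of the backward solution
  have hW : ∀ (r : ℝ) (k k' : ℕ), 0 ≤ r + k → k ≤ k' →
      π (r + k') (y k') = π (r + k) (y k) := by
    intro r k k' h0 hkk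
    obtain ⟨j, rfl⟩ := Nat.exists_eq_add_of_le hkk
    rw [← hchain j k, hsemi (r + k) (j:ℝ) h0 (Nat.cast_nonneg j)]
    congr 1
    push_cast
    ring
  refine ⟨y 0, ?_, fun r => π (r + (⌈-r⌉₊ : ℝ)) (y ⌈-r⌉₊), ?_, ?_, ?_⟩
  · have := hmem 0 0 le_rfl (by norm_num)
    rwa [hzero] at this
  · show π ((0:ℝ) + (⌈-(0:ℝ)⌉₊ : ℝ)) (y ⌈-(0:ℝ)⌉₊) = y 0
    norm_num [hzero]
  · intro s hs
    show π (s + (⌈-s⌉₊ : ℝ)) (y ⌈-s⌉₊) ∈ M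
    have hks : -s ≤ (⌈-s⌉₊ : ℝ) := Nat.le_ceil _
    exact hmem _ (s + ⌈-s⌉₊) (by linarith) (by linarith)
  · intro r s hr hs hrs
    show π ((r+s) + (⌈-(r+s)⌉₊ : ℝ)) (y ⌈-(r+s)⌉₊)
        = π s (π (r + (⌈-r⌉₊ : ℝ)) (y ⌈-r⌉₊))
    have hk : -r ≤ (⌈-r⌉₊ : ℝ) := Nat.le_ceil _
    have hk' : -(r+s) ≤ (⌈-(r+s)⌉₊ : ℝ) := Nat.le_ceil _
    rw [hsemi s (r + ⌈-r⌉₊) hs (by linarith)]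
    rw [show s + (r + (⌈-r⌉₊:ℝ)) = (r+s) + ⌈-r⌉₊ by ring]
    rcases le_total (⌈-(r+s)⌉₊) (⌈-r⌉₊) with h | h
    · exact (hW (r+s) _ _ (by linarith) h).symm
    · exact hW (r+s) _ _ (by linarith) h
end

section
/- Let (N₁, N₂) be a regular index pair (continuous inner exit time T_i), and for an interval γ = [d−h, d] ⊂ ℝ⁺ define H : [0,1] × N₁(γ) → N₁(γ) by H(λ, (d−t, x)) := (d−t, x) χ (λ t) if λ t ≤ T_i(x) and (d−t, x) χ T_i(x) otherwise. Then H is continuous, H(0, ·) = id, H fixes N₂(γ) pointwise, and H(1, ·) maps N₁(γ) into N₁'(γ) := N₁({d}) ∪ N₂(γ); hence (N₁'(γ), N₂(γ)) is a strong deformation retract of (N₁(γ), N₂(γ)). -/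
open Set

/-- The homotopy `H(λ, (d−t, x)) = (d−t,x) χ (λ t)` if `λ t ≤ T_i(x)`, and
`(d−t,x) χ T_i(x)` otherwise; here `t = d - z.1`. -/
noncomputable def retractH {X : Type*} (χ : ℝ → (ℝ × X) → (ℝ × X))
    (T : (ℝ × X) → ℝ) (d : ℝ) (lam : ℝ) (z : ℝ × X) : ℝ × X :=
  if lam * (d - z.1) ≤ T z then χ (lam * (d - z.1)) z else χ (T z) z

/-!
Writing `t = d - z.1` for the time left until the top `d` of the slab, `H(λ, z)` is `z` moved
along its orbit for time `min (λ t) (T z)`. This time is jointly continuous because `T` is, so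
`H` is continuous; it is `0` for `λ = 0` or `z ∈ N₂` (where `T = 0`), and never exceeds `T z`
nor `t`, so the orbit stays in `N₁` and in the slab. For `λ = 1` the flow runs either the full
time `t`, reaching level `d`, or until the exit time, landing in `N₂`.
-/

section RetractH

variable {X : Type*} (χ : ℝ → (ℝ × X) → (ℝ × X)) (T : (ℝ × X) → ℝ) (d : ℝ)

theorem retractH_eq_min (lam : ℝ) (z : ℝ × X) :
    retractH χ T d lam z = χ (min (lam * (d - z.1)) (T z)) z := by
  rw [retractH, min_def]
  split <;> rfl

theorem continuousOn_retractH [TopologicalSpace X] {s : Set (ℝ × X)}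
    (hcont : Continuous fun p : ℝ × (ℝ × X) => χ p.1 p.2) (hT : ContinuousOn T s) :
    ContinuousOn (fun p : ℝ × (ℝ × X) => retractH χ T d p.1 p.2) (univ ×ˢ s) := by
  have htime : ContinuousOn (fun p : ℝ × (ℝ × X) => min (p.1 * (d - p.2.1)) (T p.2))
      (univ ×ˢ s) :=
    (continuous_fst.mul (continuous_const.sub (continuous_fst.comp continuous_snd))).continuousOn
      |>.inf (hT.comp continuousOn_snd fun _ hp => hp.2)
  refine (hcont.comp_continuousOn (htime.prodMk continuousOn_snd)).congr fun p _ => ?_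
  exact retractH_eq_min χ T d p.1 p.2

variable {χ T d}

theorem retractH_eq_self_of_time_eq_zero (hzero : ∀ z, χ 0 z = z) {lam : ℝ} {z : ℝ × X}
    (htime : min (lam * (d - z.1)) (T z) = 0) : retractH χ T d lam z = z := by
  rw [retractH_eq_min, htime, hzero]

theorem retractH_zero (hzero : ∀ z, χ 0 z = z) {z : ℝ × X} (hT : 0 ≤ T z) :
    retractH χ T d 0 z = z :=
  retractH_eq_self_of_time_eq_zero hzero (by rw [zero_mul, min_eq_left hT])

theorem retractH_of_exitTime_eq_zero (hzero : ∀ z, χ 0 z = z) {lam : ℝ} {z : ℝ × X}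
    (hlam : 0 ≤ lam) (hz : z.1 ≤ d) (hT : T z = 0) : retractH χ T d lam z = z :=
  retractH_eq_self_of_time_eq_zero hzero
    (by rw [hT, min_eq_right (mul_nonneg hlam (sub_nonneg.2 hz))])

theorem fst_retractH (hfst : ∀ t : ℝ, 0 ≤ t → ∀ z : ℝ × X, (χ t z).1 = z.1 + t)
    {lam : ℝ} {z : ℝ × X} (hlam : 0 ≤ lam) (hz : z.1 ≤ d) (hT : 0 ≤ T z) :
    (retractH χ T d lam z).1 = z.1 + min (lam * (d - z.1)) (T z) := by
  rw [retractH_eq_min, hfst _ (le_min (mul_nonneg hlam (sub_nonneg.2 hz)) hT)]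

theorem retractH_mem_slab (hfst : ∀ t : ℝ, 0 ≤ t → ∀ z : ℝ × X, (χ t z).1 = z.1 + t)
    {N : Set (ℝ × X)} (horbit : ∀ z ∈ N, ∀ s ∈ Icc 0 (T z), χ s z ∈ N)
    {lam : ℝ} (hlam : lam ∈ Icc (0 : ℝ) 1) {z : ℝ × X} (hzN : z ∈ N) (hT : 0 ≤ T z)
    {a : ℝ} (hz : z.1 ∈ Icc a d) :
    retractH χ T d lam z ∈ N ∩ {z : ℝ × X | z.1 ∈ Icc a d} := by
  have ht : 0 ≤ d - z.1 := sub_nonneg.2 hz.2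
  have hmin_nonneg : 0 ≤ min (lam * (d - z.1)) (T z) := le_min (mul_nonneg hlam.1 ht) hT
  have hmin_le : min (lam * (d - z.1)) (T z) ≤ d - z.1 :=
    (min_le_left _ _).trans (mul_le_of_le_one_left ht hlam.2)
  refine ⟨?_, ?_⟩
  · rw [retractH_eq_min]
    exact horbit z hzN _ ⟨hmin_nonneg, min_le_right _ _⟩
  · rw [mem_ofPred_eq, fst_retractH hfst hlam.1 hz.2 hT]
    constructor <;> linarith [hz.1]

theorem retractH_one (hfst : ∀ t : ℝ, 0 ≤ t → ∀ z : ℝ × X, (χ t z).1 = z.1 + t)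
    {z : ℝ × X} (hz : z.1 ≤ d) (hT : 0 ≤ T z) :
    (retractH χ T d 1 z).1 = d ∨ retractH χ T d 1 z = χ (T z) z := by
  rcases le_total (d - z.1) (T z) with hle | hle
  · left
    rw [fst_retractH hfst zero_le_one hz hT, one_mul, min_eq_left hle]
    ring
  · right
    rw [retractH_eq_min, one_mul, min_eq_right hle]

end RetractH

theorem stmt19_general {X : Type*} [MetricSpace X]
    (χ : ℝ → (ℝ × X) → (ℝ × X))
    (hcont : Continuous fun p : ℝ × (ℝ × X) => χ p.1 p.2)
    (hzero : ∀ z, χ 0 z = z)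
    -- the time component advances at unit speed
    (hfst : ∀ t : ℝ, 0 ≤ t → ∀ z : ℝ × X, (χ t z).1 = z.1 + t)
    (N₁ N₂ : Set (ℝ × X))
    -- the inner exit time T_i, continuous (regularity) and finite
    (T : (ℝ × X) → ℝ)
    (hTnonneg : ∀ z ∈ N₁, 0 ≤ T z)
    (hTcont : ContinuousOn T N₁)
    (hT0 : ∀ z ∈ N₂, T z = 0)
    (horbit : ∀ z ∈ N₁, ∀ s ∈ Icc 0 (T z), χ s z ∈ N₁)
    (hexit : ∀ z ∈ N₁, χ (T z) z ∈ N₂)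
    -- the interval γ = [d − h, d]
    (d h : ℝ) :
    ContinuousOn (fun p : ℝ × (ℝ × X) => retractH χ T d p.1 p.2)
      (Icc 0 1 ×ˢ (N₁ ∩ {z | z.1 ∈ Icc (d - h) d})) ∧
    (∀ z ∈ N₁ ∩ {z : ℝ × X | z.1 ∈ Icc (d - h) d}, retractH χ T d 0 z = z) ∧
    (∀ lam ∈ Icc (0:ℝ) 1, ∀ z ∈ N₁ ∩ {z : ℝ × X | z.1 ∈ Icc (d - h) d},
      retractH χ T d lam z ∈ N₁ ∩ {z : ℝ × X | z.1 ∈ Icc (d - h) d}) ∧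
    (∀ lam ∈ Icc (0:ℝ) 1, ∀ z ∈ N₂ ∩ {z : ℝ × X | z.1 ∈ Icc (d - h) d},
      retractH χ T d lam z = z) ∧
    (∀ z ∈ N₁ ∩ {z : ℝ × X | z.1 ∈ Icc (d - h) d},
      (retractH χ T d 1 z).1 = d ∨ retractH χ T d 1 z ∈ N₂) := by
  refine ⟨?_, fun z hz => retractH_zero hzero (hTnonneg z hz.1),
    fun lam hlam z hz => retractH_mem_slab hfst horbit hlam hz.1 (hTnonneg z hz.1) hz.2,
    fun lam hlam z hz => retractH_of_exitTime_eq_zero hzero hlam.1 hz.2.2 (hT0 z hz.1),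
    fun z hz => ?_⟩
  · exact (continuousOn_retractH χ T d hcont hTcont).mono
      (prod_mono (subset_univ _) inter_subset_left)
  · rcases retractH_one hfst hz.2.2 (hTnonneg z hz.1) with hd | hlands
    · exact Or.inl hd
    · exact Or.inr (hlands ▸ hexit z hz.1)

theorem stmt19 {X : Type*} [MetricSpace X]
    (χ : ℝ → (ℝ × X) → (ℝ × X))
    (hcont : Continuous fun p : ℝ × (ℝ × X) => χ p.1 p.2)
    (hzero : ∀ z, χ 0 z = z)
    (hsemi : ∀ s t : ℝ, 0 ≤ s → 0 ≤ t → ∀ z, χ s (χ t z) = χ (s + t) z)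
    -- the time component advances at unit speed
    (hfst : ∀ t : ℝ, 0 ≤ t → ∀ z : ℝ × X, (χ t z).1 = z.1 + t)
    (N₁ N₂ : Set (ℝ × X)) (hsub : N₂ ⊆ N₁) (h₁ : IsClosed N₁) (h₂ : IsClosed N₂)
    -- N₂ is positively invariant relative to N₁
    (hposinv : ∀ z ∈ N₂, ∀ t : ℝ, 0 ≤ t →
      (∀ s ∈ Icc (0:ℝ) t, χ s z ∈ N₁) → χ t z ∈ N₂)
    -- the inner exit time T_i, continuous (regularity) and finite
    (T : (ℝ × X) → ℝ)
    (hTdef : ∀ z ∈ N₁, IsLUB {t : ℝ | 0 ≤ t ∧ ∀ s ∈ Icc 0 t, χ s z ∈ N₁ \ N₂} (T z) ∨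
      (z ∈ N₂ ∧ T z = 0))
    (hTnonneg : ∀ z ∈ N₁, 0 ≤ T z)
    (hTcont : ContinuousOn T N₁)
    (hT0 : ∀ z ∈ N₂, T z = 0)
    (horbit : ∀ z ∈ N₁, ∀ s ∈ Icc 0 (T z), χ s z ∈ N₁)
    (hexit : ∀ z ∈ N₁, χ (T z) z ∈ N₂)
    -- the interval γ = [d − h, d]
    (d h : ℝ) (hh : 0 < h) (hdh : 0 ≤ d - h) :
    ContinuousOn (fun p : ℝ × (ℝ × X) => retractH χ T d p.1 p.2)
      (Icc 0 1 ×ˢ (N₁ ∩ {z | z.1 ∈ Icc (d - h) d})) ∧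
    (∀ z ∈ N₁ ∩ {z : ℝ × X | z.1 ∈ Icc (d - h) d}, retractH χ T d 0 z = z) ∧
    (∀ lam ∈ Icc (0:ℝ) 1, ∀ z ∈ N₁ ∩ {z : ℝ × X | z.1 ∈ Icc (d - h) d},
      retractH χ T d lam z ∈ N₁ ∩ {z : ℝ × X | z.1 ∈ Icc (d - h) d}) ∧
    (∀ lam ∈ Icc (0:ℝ) 1, ∀ z ∈ N₂ ∩ {z : ℝ × X | z.1 ∈ Icc (d - h) d},
      retractH χ T d lam z = z) ∧
    (∀ z ∈ N₁ ∩ {z : ℝ × X | z.1 ∈ Icc (d - h) d},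
      (retractH χ T d 1 z).1 = d ∨ retractH χ T d 1 z ∈ N₂) :=
  stmt19_general χ hcont hzero hfst N₁ N₂ T hTnonneg hTcont hT0 horbit hexit d h
end
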